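/- For ω = y dx − λ x dy with λ ∈ ℂ \ ℚ₊ nonzero (a reduced linear singularity), any irreducible formal curve {h=0} invariant by ω is, up to a unit, equal to x or y. In particular the set of separatrices of ω at the origin consists exactly of the two curves {x=0} and {y=0}. -/

import Mathlib

noncomputable def ord (f : MvPowerSeries (Fin 2) ℂ) : ℕ :=
  sInf {n | ∃ d : Fin 2 →₀ ℕ, d 0 + d 1 = n ∧ MvPowerSeries.coeff d f ≠ 0}

noncomputable def pull (f : MvPowerSeries (Fin 2) ℂ) : MvPowerSeries (Fin 2) ℂ :=
  fun d => if d 1 ≤ d 0 then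
    MvPowerSeries.coeff (Finsupp.single 0 (d 0 - d 1) + Finsupp.single 1 (d 1)) f
  else 0

noncomputable def homPart (n : ℕ) (f : MvPowerSeries (Fin 2) ℂ) : MvPowerSeries (Fin 2) ℂ :=
  fun d => if d 0 + d 1 = n then MvPowerSeries.coeff d f else 0

noncomputable def xord (h : MvPowerSeries (Fin 2) ℂ) : ℕ :=
  sSup {k | (MvPowerSeries.X 0 : MvPowerSeries (Fin 2) ℂ) ^ k ∣ h}

noncomputable def pd (i : Fin 2) (f : MvPowerSeries (Fin 2) ℂ) : MvPowerSeries (Fin 2) ℂ :=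
  fun d => ((d i : ℕ) + 1 : ℂ) * MvPowerSeries.coeff (d + Finsupp.single i 1) f

noncomputable def evalY0 (f : MvPowerSeries (Fin 2) ℂ) : PowerSeries ℂ :=
  PowerSeries.mk fun n => MvPowerSeries.coeff (Finsupp.single 0 n) f

/-! The derivation `y ∂_y + λ x ∂_x` acts diagonally on monomials, multiplying `x^a y^b` by its
weight `b + λ a`. Comparing coefficients of `D h = h k` at an exponent of `h` that is minimal for
the componentwise order shows that its weight is `k(0)`. Two incomparable exponents of equal weight
would make `λ` a positive rational, so `h` has a unique minimal exponent, below all the others: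
`h = x^a y^b · unit`, and irreducibility forces `x^a y^b` to be `x` or `y`. -/

namespace MvPowerSeries

variable {σ R : Type*}

theorem coeff_mul_eq_coeff_mul_constantCoeff_of_forall_lt [CommSemiring R]
    {f : MvPowerSeries σ R} (g : MvPowerSeries σ R) {d : σ →₀ ℕ}
    (hf : ∀ p < d, coeff p f = 0) : coeff d (f * g) = coeff d f * constantCoeff g := by
  classical
  rw [coeff_mul, Finset.sum_eq_single (d, 0), coeff_zero_eq_constantCoeff_apply]
  · rintro ⟨p, q⟩ hpq hne
    rw [Finset.HasAntidiagonal.mem_antidiagonal] at hpq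
    have hpd : p ≠ d := by
      rintro rfl
      exact hne (by simpa using hpq)
    rw [hf p (lt_of_le_of_ne (hpq ▸ le_self_add) hpd), zero_mul]
  · simp

theorem exists_eq_monomial_mul_of_forall_le [CommSemiring R] {f : MvPowerSeries σ R}
    {D : σ →₀ ℕ} (hf : ∀ d, coeff d f ≠ 0 → D ≤ d) :
    ∃ g : MvPowerSeries σ R, f = monomial D 1 * g ∧ constantCoeff g = coeff D f := by
  classical
  let g : MvPowerSeries σ R := fun e => coeff (e + D) f
  have hg : ∀ e, coeff e g = coeff (e + D) f := fun _ => rfl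
  refine ⟨g, ext fun d => ?_, by rw [← coeff_zero_eq_constantCoeff_apply, hg, zero_add]⟩
  rw [coeff_monomial_mul]
  split_ifs with hle
  · rw [one_mul, hg, tsub_add_cancel_of_le hle]
  · exact not_ne_iff.mp (mt (hf d) hle)

theorem isUnit_monomial_one_iff [CommRing R] [Nontrivial R] {D : σ →₀ ℕ} :
    IsUnit (monomial D (1 : R)) ↔ D = 0 := by
  classical
  rw [isUnit_iff_constantCoeff, ← coeff_zero_eq_constantCoeff_apply, coeff_monomial]
  split_ifs with h
  · simp [h]
  · simp [Ne.symm h]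

theorem exists_eq_single_of_irreducible_monomial [CommRing R] [Nontrivial R] {D : σ →₀ ℕ}
    (hD : Irreducible (monomial D (1 : R))) : ∃ i, D = Finsupp.single i 1 := by
  obtain ⟨i, hi⟩ := Finsupp.ne_iff.mp (mt isUnit_monomial_one_iff.mpr hD.not_isUnit)
  have hle : Finsupp.single i 1 ≤ D :=
    Finsupp.single_le_iff.mpr (Nat.one_le_iff_ne_zero.mpr hi)
  have hsplit : monomial D (1 : R) = X i * monomial (D - Finsupp.single i 1) 1 := by
    rw [X_def, monomial_mul_monomial, mul_one, add_tsub_cancel_of_le hle]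
  refine ⟨i, ?_⟩
  rcases hD.isUnit_or_isUnit hsplit with hX | hrest
  · rw [X_def, isUnit_monomial_one_iff] at hX
    exact absurd hX (Finsupp.single_ne_zero.mpr one_ne_zero)
  · exact (tsub_eq_zero_iff_le.mp (isUnit_monomial_one_iff.mp hrest)).antisymm hle

end MvPowerSeries

open MvPowerSeries

theorem coeff_X_mul_pd (i : Fin 2) (f : MvPowerSeries (Fin 2) ℂ) (d : Fin 2 →₀ ℕ) :
    coeff d (X i * pd i f) = d i * coeff d f := by
  classical
  rw [X_def, coeff_monomial_mul]
  split_ifs with hle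
  · have hd : 1 ≤ d i := Finsupp.single_le_iff.mp hle
    change 1 * (((((d - Finsupp.single i 1 : Fin 2 →₀ ℕ) i : ℕ) : ℂ) + 1)
      * coeff (d - Finsupp.single i 1 + Finsupp.single i 1) f) = _
    rw [tsub_add_cancel_of_le hle, Finsupp.tsub_apply, Finsupp.single_eq_same,
      Nat.cast_sub hd]
    ring
  · rw [Finsupp.single_le_iff, not_le, Nat.lt_one_iff] at hle
    simp [hle]

noncomputable def weight (lam : ℂ) (d : Fin 2 →₀ ℕ) : ℂ := d 1 + lam * d 0

theorem coeff_X_mul_pd_add_C_mul_X_mul_pd (lam : ℂ) (f : MvPowerSeries (Fin 2) ℂ)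
    (d : Fin 2 →₀ ℕ) :
    coeff d (X 1 * pd 1 f + C lam * X 0 * pd 0 f) = weight lam d * coeff d f := by
  rw [map_add, mul_assoc, coeff_C_mul, coeff_X_mul_pd, coeff_X_mul_pd, weight]
  ring

theorem weight_ne_of_lt_of_lt {lam : ℂ} (hq : ∀ q : ℚ, 0 < q → (q : ℂ) ≠ lam)
    {d e : Fin 2 →₀ ℕ} (h0 : e 0 < d 0) (h1 : d 1 < e 1) : weight lam d ≠ weight lam e := by
  intro heq
  refine hq (((e 1 : ℚ) - d 1) / ((d 0 : ℚ) - e 0))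
    (div_pos (by simpa using h1) (by simpa using h0)) ?_
  have hden : (d 0 : ℂ) - e 0 ≠ 0 := sub_ne_zero.mpr (by exact_mod_cast h0.ne')
  push_cast
  rw [div_eq_iff hden]
  unfold weight at heq
  linear_combination -heq

theorem le_total_of_weight_eq {lam : ℂ} (hq : ∀ q : ℚ, 0 < q → (q : ℂ) ≠ lam)
    {d e : Fin 2 →₀ ℕ} (h : weight lam d = weight lam e) : d ≤ e ∨ e ≤ d := by
  simp only [Finsupp.le_def, Fin.forall_fin_two]
  by_contra! hne
  rcases le_or_gt (d 0) (e 0) with h0 | h0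
  · exact weight_ne_of_lt_of_lt hq (by omega) (by omega) h.symm
  · exact weight_ne_of_lt_of_lt hq h0 (by omega) h

theorem weight_eq_constantCoeff_of_minimal {lam : ℂ} {h k : MvPowerSeries (Fin 2) ℂ}
    (hk : X 1 * pd 1 h + C lam * X 0 * pd 0 h = h * k) {d : Fin 2 →₀ ℕ}
    (hd : Minimal (fun d => coeff d h ≠ 0) d) : weight lam d = constantCoeff k := by
  have hcoeff := congrArg (coeff d) hk
  rw [coeff_X_mul_pd_add_C_mul_X_mul_pd, coeff_mul_eq_coeff_mul_constantCoeff_of_forall_lt k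
    fun p hp => not_ne_iff.mp (hd.not_prop_of_lt hp), mul_comm] at hcoeff
  exact mul_left_cancel₀ hd.prop hcoeff

theorem exists_eq_monomial_mul_isUnit_of_invariant {lam : ℂ}
    (hq : ∀ q : ℚ, 0 < q → (q : ℂ) ≠ lam) {h k : MvPowerSeries (Fin 2) ℂ} (hh : h ≠ 0)
    (hk : X 1 * pd 1 h + C lam * X 0 * pd 0 h = h * k) :
    ∃ D g, IsUnit g ∧ h = monomial D 1 * g := by
  obtain ⟨d, hd⟩ := (ne_zero_iff_exists_coeff_ne_zero h).mp hh
  obtain ⟨D, -, hD⟩ := exists_minimal_le_of_wellFoundedLT (fun d => coeff d h ≠ 0) d hd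
  have hle : ∀ e, coeff e h ≠ 0 → D ≤ e := by
    intro e he
    obtain ⟨m, hme, hm⟩ := exists_minimal_le_of_wellFoundedLT (fun d => coeff d h ≠ 0) e he
    have hweight : weight lam m = weight lam D := by
      rw [weight_eq_constantCoeff_of_minimal hk hm, weight_eq_constantCoeff_of_minimal hk hD]
    have hmD : m = D := by
      rcases le_total_of_weight_eq hq hweight with hmD | hDm
      · exact hD.eq_of_le hm.prop hmD
      · exact (hm.eq_of_le hD.prop hDm).symm
    exact hmD ▸ hme
  obtain ⟨g, rfl, hg⟩ := exists_eq_monomial_mul_of_forall_le hle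
  exact ⟨D, g, isUnit_iff_constantCoeff.mpr (hg ▸ hD.prop.isUnit), rfl⟩

open MvPowerSeries in
theorem linear_reduced_separatrices_are_axes_general
    (lam : ℂ) (hq : ∀ q : ℚ, 0 < q → (q : ℂ) ≠ lam)
    (h : MvPowerSeries (Fin 2) ℂ) (hirr : Irreducible h)
    (hinv : ∃ k : MvPowerSeries (Fin 2) ℂ,
      X 1 * pd 1 h + (C lam : MvPowerSeries (Fin 2) ℂ) * X 0 * pd 0 h = h * k) :
    ∃ u : (MvPowerSeries (Fin 2) ℂ)ˣ,
      h = (u : MvPowerSeries (Fin 2) ℂ) * X 0 ∨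
      h = (u : MvPowerSeries (Fin 2) ℂ) * X 1 := by
  obtain ⟨k, hk⟩ := hinv
  obtain ⟨D, g, ⟨u, rfl⟩, rfl⟩ := exists_eq_monomial_mul_isUnit_of_invariant hq hirr.ne_zero hk
  rw [irreducible_mul_isUnit u.isUnit] at hirr
  obtain ⟨i, rfl⟩ := exists_eq_single_of_irreducible_monomial hirr
  refine ⟨u, ?_⟩
  rw [mul_comm, ← X_def]
  fin_cases i <;> simp

open MvPowerSeries in
theorem linear_reduced_separatrices_are_axes
    (lam : ℂ) (h0 : lam ≠ 0) (hq : ∀ q : ℚ, 0 < q → (q : ℂ) ≠ lam)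
    (h : MvPowerSeries (Fin 2) ℂ) (hirr : Irreducible h)
    (hinv : ∃ k : MvPowerSeries (Fin 2) ℂ,
      X 1 * pd 1 h + (C lam : MvPowerSeries (Fin 2) ℂ) * X 0 * pd 0 h = h * k) :
    ∃ u : (MvPowerSeries (Fin 2) ℂ)ˣ,
      h = (u : MvPowerSeries (Fin 2) ℂ) * X 0 ∨
      h = (u : MvPowerSeries (Fin 2) ℂ) * X 1 :=
  linear_reduced_separatrices_are_axes_general lam hq h hirr hinv
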